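/- Let (U, δ) be a differential field of characteristic zero with constants C, and K ⊆ L ⊆ U differential subfields. Then K(C) ∩ L = K if and only if C_K = C_L, i.e., K and L have the same constants. -/

import Mathlib

/-!
Elements of `K(C)` are quotients `r / s` of elements of the `K`-span of `C`, and that span is
spanned by a family `b` of constants linearly independent over `C_K = C_L`. Constants linearly
independent over the constants of a differential field `L` stay linearly independent over `L`:
differentiating a shortest `L`-relation normalised to have a coefficient `1` gives a shorter one.
So `b` is `L`-independent, and comparing `b`-coordinates in `x * s = r` for `x ∈ L` shows
`x = rᵢ / sᵢ ∈ K`. Conversely, a constant of `L` lies in `K(C) ∩ L = K`.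
-/

open Submodule

theorem Subfield.span_subset_span_of_le {U : Type*} [Field U] {F K : Subfield U} (hFK : F ≤ K)
    (s : Set U) : (span F s : Set U) ⊆ span K s := by
  intro x hx
  induction hx using span_induction with
  | mem y hy => exact subset_span hy
  | zero => exact zero_mem _
  | add _ _ _ _ h₁ h₂ => exact add_mem h₁ h₂
  | smul a _ _ h => exact smul_mem _ (⟨a, hFK a.2⟩ : K) h

theorem Subfield.mem_of_mul_mem_span {U : Type*} [Field U] {K L : Subfield U} (hKL : K ≤ L)
    {ι : Type*} {b : ι → U} (hb : LinearIndependent L b) {r s x : U}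
    (hr : r ∈ span K (Set.range b)) (hs : s ∈ span K (Set.range b)) (hs0 : s ≠ 0)
    (hx : x ∈ L) (hxs : x * s = r) : x ∈ K := by
  classical
  obtain ⟨a, rfl⟩ := Finsupp.mem_span_range_iff_exists_finsupp.1 hr
  obtain ⟨c, rfl⟩ := Finsupp.mem_span_range_iff_exists_finsupp.1 hs
  simp only [Subfield.smul_def, smul_eq_mul] at hxs
  obtain ⟨i, hci⟩ : ∃ i, c i ≠ 0 := by
    by_contra! hc
    exact hs0 (by simp [(Finsupp.ext hc : c = 0)])
  set t := a.support ∪ c.support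
  have ha : (a.sum fun j k => (k : U) * b j) = ∑ j ∈ t, (a j : U) * b j :=
    Finsupp.sum_of_support_subset _ Finset.subset_union_left _ (by simp)
  have hc : (c.sum fun j k => (k : U) * b j) = ∑ j ∈ t, (c j : U) * b j :=
    Finsupp.sum_of_support_subset _ Finset.subset_union_right _ (by simp)
  let d : ι → L := fun j => ⟨a j - x * c j, sub_mem (hKL (a j).2) (mul_mem hx (hKL (c j).2))⟩
  have hrel : ∑ j ∈ t, d j • b j = 0 := by
    simp only [d, Subfield.smul_def, smul_eq_mul, sub_mul, Finset.sum_sub_distrib, mul_assoc,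
      ← Finset.mul_sum, ← ha, ← hc, hxs, sub_self]
  have hdi := linearIndependent_iff'.1 hb t _ hrel i
    (Finset.mem_union_right _ (by simpa using hci))
  have hxi : x * c i = a i := (sub_eq_zero.1 (congrArg Subtype.val hdi)).symm
  rw [eq_div_of_mul_eq (Subtype.coe_ne_coe.2 hci) hxi]
  exact div_mem (a i).2 (c i).2

namespace Derivation

variable {R U : Type*} [CommRing R] [Field U] [Algebra R U]

def constants (D : Derivation R U U) : Subfield U where
  carrier := {x | D x = 0}
  zero_mem' := D.map_zero
  one_mem' := D.map_one_eq_zero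
  add_mem' {a b} ha hb := by simp_all
  neg_mem' {a} ha := by simp_all
  mul_mem' {a b} ha hb := by simp_all
  inv_mem' a ha := by simp_all [leibniz_inv]

variable {D : Derivation R U U}

theorem linearIndependent_of_linearIndependent_constants {L : Subfield U}
    (hL : ∀ x ∈ L, D x ∈ L) {ι : Type*} {e : ι → U} (he : ∀ i, D (e i) = 0)
    (hli : LinearIndependent ↥(L ⊓ D.constants) e) : LinearIndependent L e := by
  classical
  rw [linearIndependent_iff''] at hli ⊢
  intro s
  induction s using Finset.strongInduction with
  | H s ih =>
  intro g hgs hg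
  by_contra! ⟨i, hgi⟩
  have hi : i ∈ s := by_contra fun hi => hgi (hgs i hi)
  simp only [Subfield.smul_def, smul_eq_mul] at hg
  -- normalise the relation so that the `i`-th coefficient is `1`; its derivative is a shorter one
  set h : ι → L := fun k => g k / g i
  have hrel : ∑ k ∈ s, (h k : U) * e k = 0 := by
    simp only [h, Subfield.coe_div, div_mul_eq_mul_div, ← Finset.sum_div, hg, zero_div]
  have hhi : h i = 1 := div_self hgi
  set h' : ι → L := fun k => ⟨D (h k), hL _ (h k).2⟩
  have hh'i : h' i = 0 := Subtype.ext <| by simp [h', hhi]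
  have hderiv : ∀ k, D (h k) = 0 := by
    refine fun k => congrArg Subtype.val (ih _ (Finset.erase_ssubset hi) h' ?_ ?_ k)
    · intro k hk
      rcases eq_or_ne k i with rfl | hki
      · exact hh'i
      · have hks : k ∉ s := fun hks => hk (Finset.mem_erase.2 ⟨hki, hks⟩)
        exact Subtype.ext <| by simp [h', h, hgs k hks]
    · rw [Finset.sum_erase _ (by simp [hh'i])]
      have hDrel := congrArg D hrel
      rw [map_sum, map_zero] at hDrel
      simpa [h', he, leibniz, Subfield.smul_def, mul_comm] using hDrel
  have hhi0 := hli s (fun k => ⟨h k, (h k).2, hderiv k⟩)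
    (fun k hk => Subtype.ext <| by simp [h, hgs k hk]) (by simpa [Subfield.smul_def] using hrel) i
  simp [Subtype.ext_iff, hhi] at hhi0

theorem mem_span_constants_of_mem_subringClosure (K : Subfield U) {x : U}
    (hx : x ∈ Subring.closure ((K : Set U) ∪ D.constants)) :
    x ∈ span K (D.constants : Set U) := by
  have hle : Subring.closure ((K : Set U) ∪ D.constants) ≤
      (Algebra.adjoin K (D.constants : Set U)).toSubring :=
    Subring.closure_le.2 <| Set.union_subset
      (fun y hy => Subalgebra.algebraMap_mem _ (⟨y, hy⟩ : K)) Algebra.subset_adjoin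
  have := Algebra.adjoin_eq_span K (D.constants : Set U)
  rw [show Submonoid.closure (D.constants : Set U) = D.constants.toSubmonoid from
    Submonoid.closure_eq _] at this
  rw [← SetLike.mem_coe, ← Subfield.coe_toSubmonoid, ← this]
  exact hle hx

theorem mem_of_mem_closure_constants_of_inf_constants_eq {K L : Subfield U}
    (hL : ∀ x ∈ L, D x ∈ L) (hKL : K ≤ L) (hKLc : K ⊓ D.constants = L ⊓ D.constants)
    {x : U} (hx : x ∈ Subfield.closure ((K : Set U) ∪ D.constants)) (hxL : x ∈ L) :
    x ∈ K := by
  obtain ⟨r, hr, s, hs, rfl⟩ := Subfield.mem_closure_iff.1 hx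
  rcases eq_or_ne s 0 with rfl | hs0
  · simp
  obtain ⟨b, hbC, hspan, hbli⟩ :=
    exists_linearIndependent ↥(K ⊓ D.constants) (D.constants : Set U)
  have hbL : LinearIndependent L (Subtype.val : b → U) :=
    linearIndependent_of_linearIndependent_constants hL (fun i => hbC i.2) (hKLc ▸ hbli)
  have hCb : span K (D.constants : Set U) ≤ span K (Set.range (Subtype.val : b → U)) := by
    rw [Subtype.range_coe, span_le]
    exact fun c hc => Subfield.span_subset_span_of_le inf_le_left _ (hspan ▸ subset_span hc)
  exact Subfield.mem_of_mul_mem_span hKL hbL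
    (hCb (mem_span_constants_of_mem_subringClosure K hr))
    (hCb (mem_span_constants_of_mem_subringClosure K hs)) hs0 hxL (div_mul_cancel₀ r hs0)

end Derivation

theorem adjoin_constants_inter_eq_iff_same_constants_general
    (U : Type*) [Field U] (δ : U → U)
    (hadd : ∀ a b, δ (a + b) = δ a + δ b)
    (hmul : ∀ a b, δ (a * b) = a * δ b + b * δ a)
    (K L : Subfield U)
    (hL : ∀ x ∈ L, δ x ∈ L)
    (hKL : K ≤ L) :
    (Subfield.closure ((K : Set U) ∪ {x : U | δ x = 0}) ⊓ L = K) ↔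
      ((K : Set U) ∩ {x : U | δ x = 0} = (L : Set U) ∩ {x : U | δ x = 0}) := by
  obtain ⟨D, rfl⟩ : ∃ D : Derivation ℤ U U, ⇑D = δ :=
    ⟨Derivation.mk' (AddMonoidHom.mk' δ hadd).toIntLinearMap (by simpa using hmul), rfl⟩
  change Subfield.closure ((K : Set U) ∪ D.constants) ⊓ L = K ↔
    ((K ⊓ D.constants : Subfield U) : Set U) = (L ⊓ D.constants : Subfield U)
  rw [SetLike.coe_set_eq]
  constructor
  · intro h
    refine le_antisymm (inf_le_inf_right _ hKL) fun u ⟨huL, huC⟩ => ⟨?_, huC⟩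
    exact h ▸ ⟨Subfield.subset_closure (Or.inr huC), huL⟩
  · intro hKLc
    refine le_antisymm ?_ (le_inf (fun k hk => Subfield.subset_closure (Or.inl hk)) hKL)
    rintro x ⟨hx, hxL⟩
    exact Derivation.mem_of_mem_closure_constants_of_inf_constants_eq hL hKL hKLc hx hxL

/-- Lemma 3.1(ii): for differential subfields `K ⊆ L` of a differential field `U`
with constants `C`, one has `K(C) ∩ L = K` if and only if `C_K = C_L`. -/
theorem adjoin_constants_inter_eq_iff_same_constants
    (U : Type*) [Field U] [CharZero U] (δ : U → U)
    (hadd : ∀ a b, δ (a + b) = δ a + δ b)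
    (hmul : ∀ a b, δ (a * b) = a * δ b + b * δ a)
    (K L : Subfield U)
    (hK : ∀ x ∈ K, δ x ∈ K)
    (hL : ∀ x ∈ L, δ x ∈ L)
    (hKL : K ≤ L) :
    (Subfield.closure ((K : Set U) ∪ {x : U | δ x = 0}) ⊓ L = K) ↔
      ((K : Set U) ∩ {x : U | δ x = 0} = (L : Set U) ∩ {x : U | δ x = 0}) :=
  adjoin_constants_inter_eq_iff_same_constants_general U δ hadd hmul K L hL hKL
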